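/- arXiv:1407.4870 — 3 statements merged into one kernel-verified Lean document; each statement's English description precedes it below -/
import Mathlib

section
/- Let Q be a nonnegative primitive matrix with Q^T·1 = 1 (column-stochastic). Let x(0) have entries x_1(0) = p_D - a_1 and x_i(0) = -a_i for i ≥ 2, and y(0) have entries y_i(0) = b_i - a_i with a_i < b_i. If x_ss = lim_{m→∞} Q^m x(0) and y_ss = lim_{m→∞} Q^m y(0), then for every i with y_{i,ss} ≠ 0, a_i + ((b_i - a_i)/y_{i,ss})·x_{i,ss} = a_i + ((b_i - a_i)/(∑_j b_j - ∑_j a_j))·(p_D - ∑_j a_j). -/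
open Finset Matrix Filter

-- strict triangle inequality when both signs present
lemma abs_sum_lt {ι : Type*} [Fintype ι] (f : ι → ℝ)
    (hp : ∃ p, 0 < f p) (hq : ∃ q, f q < 0) :
    |∑ i, f i| < ∑ i, |f i| := by
  obtain ⟨p, hp⟩ := hp
  obtain ⟨q, hq⟩ := hq
  have hA : (0:ℝ) < ∑ i, max (f i) 0 := by
    have := Finset.single_le_sum (f := fun i => max (f i) 0)
      (fun i _ => le_max_right _ _) (Finset.mem_univ p)
    have : f p ≤ ∑ i, max (f i) 0 := le_trans (le_max_left _ _) this
    linarith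
  have hB : (0:ℝ) < ∑ i, max (-(f i)) 0 := by
    have := Finset.single_le_sum (f := fun i => max (-(f i)) 0)
      (fun i _ => le_max_right _ _) (Finset.mem_univ q)
    have : -(f q) ≤ ∑ i, max (-(f i)) 0 := le_trans (le_max_left _ _) this
    linarith
  have h1 : ∑ i, f i = ∑ i, max (f i) 0 - ∑ i, max (-(f i)) 0 := by
    rw [← Finset.sum_sub_distrib]
    congr 1; ext i
    rcases le_total (f i) 0 with h | h
    · simp [max_eq_right h, max_eq_left (neg_nonneg.mpr h)]
    · simp [max_eq_left h, max_eq_right (neg_nonpos.mpr h)]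
  have h2 : ∑ i, |f i| = ∑ i, max (f i) 0 + ∑ i, max (-(f i)) 0 := by
    rw [← Finset.sum_add_distrib]
    congr 1; ext i
    rcases le_total (f i) 0 with h | h
    · simp [abs_of_nonpos h, max_eq_right h, max_eq_left (neg_nonneg.mpr h)]
    · simp [abs_of_nonneg h, max_eq_left h, max_eq_right (neg_nonpos.mpr h)]
  rw [h1, h2, abs_sub_lt_iff]
  constructor <;> linarith

lemma fixed_zero_sum {n : ℕ} (P : Matrix (Fin (n+1)) (Fin (n+1)) ℝ)
    (hP : ∀ i j, 0 < P i j) (hPc : ∀ j, ∑ i, P i j = 1)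
    (w : Fin (n+1) → ℝ) (hw : P *ᵥ w = w) (hs : ∑ i, w i = 0) :
    w = 0 := by
  by_contra hne
  -- get both signs or contradiction
  have hpos : ∃ p, 0 < w p := by
    by_contra h
    push_neg at h
    have : ∀ i ∈ Finset.univ, w i = 0 := by
      intro i _
      have hge : ∀ i ∈ (Finset.univ : Finset (Fin (n+1))), (0:ℝ) ≤ -w i :=
        fun i _ => by linarith [h i]
      have : ∑ i, -w i = 0 := by simp [hs]
      have := (Finset.sum_eq_zero_iff_of_nonneg hge).mp this i (Finset.mem_univ i)
      linarith
    exact hne (funext fun i => this i (Finset.mem_univ i))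
  have hneg : ∃ q, w q < 0 := by
    by_contra h
    push_neg at h
    have : ∀ i ∈ (Finset.univ : Finset (Fin (n+1))), w i = 0 :=
      (Finset.sum_eq_zero_iff_of_nonneg (fun i _ => h i)).mp hs
    exact hne (funext fun i => this i (Finset.mem_univ i))
  obtain ⟨p, hp⟩ := hpos
  obtain ⟨q, hq⟩ := hneg
  have key : ∀ i, |w i| < ∑ j, P i j * |w j| := by
    intro i
    have h1 : |w i| = |∑ j, P i j * w j| := by
      conv_lhs => rw [← hw]
      rfl
    rw [h1]
    have := abs_sum_lt (fun j => P i j * w j)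
      ⟨p, mul_pos (hP i p) hp⟩ ⟨q, mul_neg_of_pos_of_neg (hP i q) hq⟩
    calc |∑ j, P i j * w j| < ∑ j, |P i j * w j| := this
      _ = ∑ j, P i j * |w j| := by
          refine Finset.sum_congr rfl fun j _ => ?_
          rw [abs_mul, abs_of_pos (hP i j)]
  have hlt : ∑ i, |w i| < ∑ i, ∑ j, P i j * |w j| :=
    Finset.sum_lt_sum_of_nonempty Finset.univ_nonempty (fun i _ => key i)
  have heq : ∑ i, ∑ j, P i j * |w j| = ∑ i, |w i| := by
    rw [Finset.sum_comm]
    refine Finset.sum_congr rfl fun j _ => ?_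
    rw [← Finset.sum_mul, hPc j, one_mul]
  rw [heq] at hlt
  exact lt_irrefl _ hlt

-- column sums of powers
lemma pow_colsum {n : ℕ} (Q : Matrix (Fin (n+1)) (Fin (n+1)) ℝ)
    (hcol : ∀ j, ∑ i, Q i j = 1) : ∀ m j, ∑ i, (Q ^ m) i j = 1 := by
  intro m
  induction m with
  | zero => intro j; simp [Matrix.one_apply, Finset.sum_ite_eq]
  | succ m ih =>
    intro j
    rw [pow_succ]
    have : ∀ i, (Q ^ m * Q) i j = ∑ l, (Q ^ m) i l * Q l j := fun i => rfl
    simp only [this]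
    rw [Finset.sum_comm]
    calc ∑ l, ∑ i, (Q ^ m) i l * Q l j = ∑ l, (∑ i, (Q ^ m) i l) * Q l j := by
            simp [Finset.sum_mul]
      _ = ∑ l, Q l j := by simp [ih]
      _ = 1 := hcol j

lemma sum_mulVec {n : ℕ} (Q : Matrix (Fin (n+1)) (Fin (n+1)) ℝ)
    (hcol : ∀ j, ∑ i, Q i j = 1) (m : ℕ) (v : Fin (n+1) → ℝ) :
    ∑ i, ((Q ^ m) *ᵥ v) i = ∑ i, v i := by
  simp only [Matrix.mulVec, dotProduct]
  rw [Finset.sum_comm]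
  calc ∑ j, ∑ i, (Q ^ m) i j * v j = ∑ j, (∑ i, (Q ^ m) i j) * v j := by
        simp [Finset.sum_mul]
    _ = ∑ j, v j := by simp [pow_colsum Q hcol]

-- limit of Q^m *ᵥ v is a fixed vector of Q
lemma limit_fixed {n : ℕ} (Q : Matrix (Fin (n+1)) (Fin (n+1)) ℝ)
    (v w : Fin (n+1) → ℝ)
    (hv : Tendsto (fun m : ℕ => (Q ^ m) *ᵥ v) atTop (nhds w)) :
    Q *ᵥ w = w := by
  have h1 : Tendsto (fun m : ℕ => Q *ᵥ ((Q ^ m) *ᵥ v)) atTop (nhds (Q *ᵥ w)) := by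
    rw [tendsto_pi_nhds]
    intro i
    have : ∀ u : Fin (n+1) → ℝ, (Q *ᵥ u) i = ∑ j, Q i j * u j := fun u => rfl
    simp only [this]
    exact tendsto_finset_sum _ fun j _ =>
      ((tendsto_pi_nhds.mp hv j).const_mul (Q i j))
  have h2 : (fun m : ℕ => Q *ᵥ ((Q ^ m) *ᵥ v)) = fun m => (Q ^ (m+1)) *ᵥ v := by
    funext m
    rw [Matrix.mulVec_mulVec, ← pow_succ']
  rw [h2] at h1
  have h3 : Tendsto (fun m : ℕ => (Q ^ (m+1)) *ᵥ v) atTop (nhds w) :=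
    hv.comp (tendsto_add_atTop_nat 1)
  exact tendsto_nhds_unique h1 h3

lemma limit_sum {n : ℕ} (Q : Matrix (Fin (n+1)) (Fin (n+1)) ℝ)
    (hcol : ∀ j, ∑ i, Q i j = 1) (v w : Fin (n+1) → ℝ)
    (hv : Tendsto (fun m : ℕ => (Q ^ m) *ᵥ v) atTop (nhds w)) :
    ∑ i, w i = ∑ i, v i := by
  have h1 : Tendsto (fun m : ℕ => ∑ i, ((Q ^ m) *ᵥ v) i) atTop (nhds (∑ i, w i)) :=
    tendsto_finset_sum _ fun i _ => tendsto_pi_nhds.mp hv i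
  have h2 : (fun m : ℕ => ∑ i, ((Q ^ m) *ᵥ v) i) = fun _ => ∑ i, v i := by
    funext m; exact sum_mulVec Q hcol m v
  rw [h2] at h1
  exact tendsto_nhds_unique h1 tendsto_const_nhds

theorem ratio_consensus_recovers_coordination (n : ℕ)
    (Q : Matrix (Fin (n + 1)) (Fin (n + 1)) ℝ)
    (hnonneg : ∀ i j, 0 ≤ Q i j)
    (hprim : ∃ k : ℕ, ∀ i j, 0 < (Q ^ k) i j)
    (hcol : ∀ j, ∑ i, Q i j = 1)
    (a b : Fin (n + 1) → ℝ) (pD : ℝ) (hab : ∀ i, a i < b i)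
    (x0 y0 xss yss : Fin (n + 1) → ℝ)
    (hx0 : ∀ i, x0 i = if i = 0 then pD - a i else -a i)
    (hy0 : ∀ i, y0 i = b i - a i)
    (hxss : Tendsto (fun m : ℕ => (Q ^ m) *ᵥ x0) atTop (nhds xss))
    (hyss : Tendsto (fun m : ℕ => (Q ^ m) *ᵥ y0) atTop (nhds yss)) :
    ∀ i, yss i ≠ 0 →
      a i + ((b i - a i) / yss i) * xss i
        = a i + ((b i - a i) / (∑ j, b j - ∑ j, a j)) * (pD - ∑ j, a j) := by
  obtain ⟨k, hk⟩ := hprim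
  set Sx := ∑ i, x0 i with hSxdef
  set Sy := ∑ i, y0 i with hSydef
  set z : Fin (n+1) → ℝ := fun i => Sy * x0 i - Sx * y0 i with hzdef
  set w : Fin (n+1) → ℝ := fun i => Sy * xss i - Sx * yss i with hwdef
  -- Q^m z = Sy (Q^m x0) - Sx (Q^m y0)
  have hzm : ∀ m : ℕ, (Q ^ m) *ᵥ z =
      fun i => Sy * ((Q ^ m *ᵥ x0) i) - Sx * ((Q ^ m *ᵥ y0) i) := by
    intro m
    funext i
    simp only [hzdef, Matrix.mulVec, dotProduct, mul_sub,
      Finset.sum_sub_distrib, Finset.mul_sum]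
    congr 1 <;> exact Finset.sum_congr rfl fun j _ => by ring
  have hzt : Tendsto (fun m : ℕ => (Q ^ m) *ᵥ z) atTop (nhds w) := by
    rw [tendsto_pi_nhds]
    intro i
    simp only [hzm]
    exact ((tendsto_pi_nhds.mp hxss i).const_mul Sy).sub
      ((tendsto_pi_nhds.mp hyss i).const_mul Sx)
  have hwfix : Q *ᵥ w = w := limit_fixed Q z w hzt
  have hwsum : ∑ i, w i = 0 := by
    rw [limit_sum Q hcol z w hzt]
    simp only [hzdef, Finset.sum_sub_distrib, ← Finset.mul_sum, ← hSxdef, ← hSydef]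
    ring
  have hPfix : ∀ m : ℕ, (Q ^ m) *ᵥ w = w := by
    intro m
    induction m with
    | zero => simp
    | succ m ih => rw [pow_succ', ← Matrix.mulVec_mulVec, ih, hwfix]
  have hw0 : w = 0 := fixed_zero_sum (Q ^ k) hk (pow_colsum Q hcol k) w (hPfix k) hwsum
  -- compute sums
  have hSx : Sx = pD - ∑ j, a j := by
    have h : ∀ i, x0 i = (if i = 0 then pD else 0) - a i := by
      intro i; rw [hx0 i]; by_cases h : i = 0 <;> simp [h]
    simp only [hSxdef, h, Finset.sum_sub_distrib, Finset.sum_ite_eq',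
      Finset.mem_univ, if_true]
  have hSy : Sy = ∑ j, b j - ∑ j, a j := by
    simp only [hSydef, hy0, Finset.sum_sub_distrib]
  have hSypos : 0 < Sy := by
    rw [hSy, sub_pos]
    exact Finset.sum_lt_sum_of_nonempty Finset.univ_nonempty fun i _ => hab i
  intro i hyi
  have hrel : Sy * xss i = Sx * yss i := by
    have := congrFun hw0 i
    simp only [hwdef, Pi.zero_apply] at this
    linarith
  rw [← hSy, ← hSx]
  have hSyne : Sy ≠ 0 := ne_of_gt hSypos
  field_simp
  linear_combination (b i - a i) * hrel
end

section
/- Let e ∈ ℝ^n with ∑_i e_i = 0, and run the Metropolis–Hastings consensus g(t+1) = S g(t), g(0) = e, on a connected graph, together with h_{ij}(t+1) = h_{ij}(t) + a_{ij}(g_j(t) - g_i(t)), h_{ij}(0) = 0, where a_{ij} = 1/(1+max{deg i, deg j}). Then the limits h_{ij,ss} = lim_{t→∞} h_{ij}(t) exist and satisfy ∑_{j∈N_i} h_{ij,ss} = -e_i for every i. -/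
/-!
The Metropolis–Hastings matrix `S` is symmetric and row-stochastic, with positive diagonal and
positive entries on the edges of a connected graph. By the maximum principle every eigenvalue of
`S` has modulus `< 1`, except the eigenvalue `1`, whose eigenvectors are constant and hence
orthogonal to `e` because `∑ eᵢ = 0`. Expanding `e` in an orthonormal eigenbasis, `g t = Sᵗ e` is
a combination of geometric sequences of ratio `< 1`, so it is summable; the increments of `h` are
differences of coordinates of `g`, so `h` converges. Finally `(S x)ᵢ = xᵢ + ∑_{j ∼ i} aᵢⱼ (xⱼ - xᵢ)`
gives the conservation law `∑_{j ∼ i} hᵢⱼ(t) = gᵢ(t) - eᵢ`, and `g t → 0`.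
-/

open Finset Matrix Filter

namespace Matrix

section Stochastic

variable {ι : Type*} [Fintype ι] [DecidableEq ι] {S : Matrix ι ι ℝ}

-- `‖·‖` is the sup norm on `ι → ℝ`.
theorem norm_mulVec_le_of_mem_rowStochastic (hS : S ∈ rowStochastic ℝ ι) (v : ι → ℝ) :
    ‖S *ᵥ v‖ ≤ ‖v‖ := by
  refine (pi_norm_le_iff_of_nonneg (norm_nonneg v)).mpr fun i => ?_
  calc ‖(S *ᵥ v) i‖ = |∑ j, S i j * v j| := rfl
    _ ≤ ∑ j, |S i j * v j| := abs_sum_le_sum_abs _ _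
    _ ≤ ∑ j, S i j * ‖v‖ := sum_le_sum fun j _ => by
        rw [abs_mul, abs_of_nonneg (nonneg_of_mem_rowStochastic hS)]
        exact mul_le_mul_of_nonneg_left (norm_le_pi_norm v j) (nonneg_of_mem_rowStochastic hS)
    _ = ‖v‖ := by rw [← sum_mul, sum_row_of_mem_rowStochastic hS, one_mul]

theorem abs_le_one_of_mulVec_eq_smul (hS : S ∈ rowStochastic ℝ ι) {v : ι → ℝ} {μ : ℝ}
    (hv : S *ᵥ v = μ • v) (hv0 : v ≠ 0) : |μ| ≤ 1 := by
  have h := norm_mulVec_le_of_mem_rowStochastic hS v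
  rw [hv, norm_smul, Real.norm_eq_abs] at h
  exact (mul_le_iff_le_one_left (norm_pos_iff.mpr hv0)).mp h

/-- Maximum principle: a convex combination of values `≤ M` that reaches `M` only charges
entries equal to `M`. -/
theorem eq_of_le_of_le_mulVec_apply (hS : S ∈ rowStochastic ℝ ι) {w : ι → ℝ} {M : ℝ}
    (hw : ∀ j, w j ≤ M) {i : ι} (hi : M ≤ (S *ᵥ w) i) {j : ι} (hij : 0 < S i j) :
    w j = M := by
  have hterm : ∀ k ∈ univ, 0 ≤ S i k * (M - w k) := fun k _ =>
    mul_nonneg (nonneg_of_mem_rowStochastic hS) (sub_nonneg.mpr (hw k))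
  have hsum : ∑ k, S i k * (M - w k) = M - (S *ᵥ w) i := by
    simp only [mul_sub, sum_sub_distrib, ← sum_mul, sum_row_of_mem_rowStochastic hS, one_mul]
    rfl
  have hzero := (sum_eq_zero_iff_of_nonneg hterm).mp
    (le_antisymm (by linarith) (sum_nonneg hterm)) j (mem_univ j)
  linarith [(mul_eq_zero.mp hzero).resolve_left hij.ne']

theorem eq_of_mulVec_eq_self {G : SimpleGraph ι} (hconn : G.Connected)
    (hS : S ∈ rowStochastic ℝ ι) (hadj : ∀ i j, G.Adj i j → 0 < S i j) {v : ι → ℝ}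
    (hv : S *ᵥ v = v) (i j : ι) : v i = v j := by
  have := hconn.nonempty
  obtain ⟨i₀, hi₀⟩ := Finite.exists_max v
  have hmax (k : ι) : v k = v i₀ := by
    induction (G.reachable_iff_reflTransGen i₀ k).mp (hconn i₀ k) with
    | refl => rfl
    | tail _ hxy ih => exact eq_of_le_of_le_mulVec_apply hS hi₀ (by rw [hv, ih]) (hadj _ _ hxy)
  rw [hmax i, hmax j]

theorem eq_zero_of_mulVec_eq_neg_of_abs_le (hS : S ∈ rowStochastic ℝ ι)
    (hdiag : ∀ i, 0 < S i i) {v : ι → ℝ} (hv : S *ᵥ v = -v) {i : ι} (hi : ∀ j, |v j| ≤ v i) :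
    v i = 0 := by
  have h := eq_of_le_of_le_mulVec_apply hS (w := -v) (fun j => (neg_le_abs (v j)).trans (hi j))
    (by rw [mulVec_neg, hv, neg_neg]) (hdiag i)
  rw [Pi.neg_apply] at h
  linarith

theorem eq_zero_of_mulVec_eq_neg (hS : S ∈ rowStochastic ℝ ι) (hdiag : ∀ i, 0 < S i i)
    {v : ι → ℝ} (hv : S *ᵥ v = -v) : v = 0 := by
  rcases isEmpty_or_nonempty ι with hι | hι
  · exact Subsingleton.elim _ _
  obtain ⟨i, hi⟩ := Finite.exists_max fun j => |v j|
  have hvi : |v i| = 0 := by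
    rcases abs_cases (v i) with ⟨habs, -⟩ | ⟨habs, -⟩
    · rw [habs]
      exact eq_zero_of_mulVec_eq_neg_of_abs_le hS hdiag hv fun j => habs ▸ hi j
    · rw [habs, neg_eq_zero]
      refine neg_eq_zero.mp (eq_zero_of_mulVec_eq_neg_of_abs_le hS hdiag (v := -v)
        (by rw [mulVec_neg, hv]) fun j => ?_)
      simpa [habs] using hi j
  funext j
  exact abs_nonpos_iff.mp (hvi ▸ hi j)

theorem abs_lt_one_or_eq_of_mulVec_eq_smul {G : SimpleGraph ι} (hconn : G.Connected)
    (hS : S ∈ rowStochastic ℝ ι) (hdiag : ∀ i, 0 < S i i) (hadj : ∀ i j, G.Adj i j → 0 < S i j)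
    {v : ι → ℝ} {μ : ℝ} (hv : S *ᵥ v = μ • v) : |μ| < 1 ∨ ∀ i j, v i = v j := by
  by_cases hv0 : v = 0
  · exact Or.inr fun i j => by simp [hv0]
  rcases (abs_le_one_of_mulVec_eq_smul hS hv hv0).lt_or_eq with hlt | habs
  · exact Or.inl hlt
  rcases (abs_eq zero_le_one).mp habs with rfl | rfl
  · exact Or.inr (eq_of_mulVec_eq_self hconn hS hadj (by simpa using hv))
  · exact absurd (eq_zero_of_mulVec_eq_neg hS hdiag (by simpa using hv)) hv0

end Stochastic

namespace IsHermitian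

variable {ι : Type*} [Fintype ι] [DecidableEq ι] {A : Matrix ι ι ℝ}

theorem pow_mulVec_eigenvectorBasis (hA : A.IsHermitian) (t : ℕ) (k : ι) :
    A ^ t *ᵥ ⇑(hA.eigenvectorBasis k) = hA.eigenvalues k ^ t • ⇑(hA.eigenvectorBasis k) := by
  induction t with
  | zero => simp
  | succ t ih =>
    rw [pow_succ', ← mulVec_mulVec, ih, mulVec_smul, hA.mulVec_eigenvectorBasis, smul_smul,
      ← pow_succ]

theorem pow_mulVec_eq_sum (hA : A.IsHermitian) (t : ℕ) (v : ι → ℝ) :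
    A ^ t *ᵥ v = ∑ k, (hA.eigenvalues k ^ t * inner ℝ (hA.eigenvectorBasis k) (WithLp.toLp 2 v))
      • ⇑(hA.eigenvectorBasis k) := by
  conv_lhs => rw [← WithLp.ofLp_toLp 2 v, ← hA.eigenvectorBasis.sum_repr' (WithLp.toLp 2 v)]
  simp only [WithLp.ofLp_sum, WithLp.ofLp_smul, mulVec_sum, mulVec_smul,
    hA.pow_mulVec_eigenvectorBasis, smul_smul, mul_comm]

theorem summable_pow_mulVec (hA : A.IsHermitian) {v : ι → ℝ}
    (hv : ∀ k, |hA.eigenvalues k| < 1 ∨ inner ℝ (hA.eigenvectorBasis k) (WithLp.toLp 2 v) = 0) :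
    Summable fun t : ℕ => A ^ t *ᵥ v := by
  simp_rw [hA.pow_mulVec_eq_sum]
  refine summable_sum fun k _ => ?_
  rcases hv k with hlt | h0
  · exact ((summable_geometric_of_abs_lt_one hlt).mul_right _).smul_const _
  · simp only [h0, mul_zero, zero_smul]
    exact summable_zero

end IsHermitian

end Matrix

theorem tendsto_add_tsum_sub_of_summable {E : Type*} [AddCommGroup E] [TopologicalSpace E]
    [ContinuousAdd E] {f : ℕ → E} (hf : Summable fun t => f (t + 1) - f t) :
    Tendsto f atTop (nhds (f 0 + ∑' t, (f (t + 1) - f t))) := by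
  have h := (tendsto_const_nhds (x := f 0)).add hf.hasSum.tendsto_sum_nat
  simp only [sum_range_sub, add_sub_cancel] at h
  exact h

namespace SimpleGraph

variable {V : Type*} [Fintype V] (G : SimpleGraph V) [DecidableRel G.Adj]

noncomputable def metropolisWeight (i j : V) : ℝ := 1 / (1 + max (G.degree i) (G.degree j) : ℝ)

variable {G}

theorem metropolisWeight_pos (i j : V) : 0 < G.metropolisWeight i j := by
  unfold metropolisWeight
  positivity

theorem metropolisWeight_comm (i j : V) : G.metropolisWeight i j = G.metropolisWeight j i := by
  simp only [metropolisWeight, max_comm]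

theorem sum_metropolisWeight_lt_one (i : V) :
    ∑ k ∈ G.neighborFinset i, G.metropolisWeight i k < 1 := by
  calc ∑ k ∈ G.neighborFinset i, G.metropolisWeight i k
      ≤ ∑ _k ∈ G.neighborFinset i, 1 / (1 + G.degree i : ℝ) := sum_le_sum fun k _ => by
        unfold metropolisWeight
        gcongr
        exact_mod_cast le_max_left _ _
    _ = G.degree i / (1 + G.degree i) := by
        rw [sum_const, card_neighborFinset_eq_degree, nsmul_eq_mul, mul_one_div]
    _ < 1 := by
        rw [div_lt_one (by positivity)]
        linarith

variable (G) [DecidableEq V]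

def IsMetropolisMatrix (S : Matrix V V ℝ) : Prop :=
  ∀ i j, S i j = if G.Adj i j then G.metropolisWeight i j
    else if i = j then 1 - ∑ k ∈ G.neighborFinset i, G.metropolisWeight i k else 0

variable {G}

namespace IsMetropolisMatrix

variable {S : Matrix V V ℝ}

theorem apply_of_adj (hS : G.IsMetropolisMatrix S) {i j : V} (hij : G.Adj i j) :
    S i j = G.metropolisWeight i j := by
  rw [hS, if_pos hij]

theorem apply_self (hS : G.IsMetropolisMatrix S) (i : V) :
    S i i = 1 - ∑ k ∈ G.neighborFinset i, G.metropolisWeight i k := by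
  rw [hS, if_neg (G.irrefl (v := i)), if_pos rfl]

theorem mulVec_apply (hS : G.IsMetropolisMatrix S) (x : V → ℝ) (i : V) :
    (S *ᵥ x) i = x i + ∑ j ∈ G.neighborFinset i, G.metropolisWeight i j * (x j - x i) := by
  have hterm (j : V) : S i j * x j =
      (if i = j then (1 - ∑ k ∈ G.neighborFinset i, G.metropolisWeight i k) * x i else 0) +
      if G.Adj i j then G.metropolisWeight i j * x j else 0 := by
    by_cases hij : G.Adj i j
    · simp [hS.apply_of_adj hij, hij, hij.ne]
    · by_cases h : i = j
      · subst h; simp [hS.apply_self]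
      · simp [hS i j, hij, h]
  rw [mulVec, dotProduct, sum_congr rfl fun j _ => hterm j, sum_add_distrib, sum_ite_eq,
    ← sum_filter, ← neighborFinset_eq_filter]
  simp only [mem_univ, if_true, mul_sub, sum_sub_distrib, ← sum_mul]
  ring

theorem apply_self_pos (hS : G.IsMetropolisMatrix S) (i : V) : 0 < S i i := by
  rw [hS.apply_self]
  linarith [sum_metropolisWeight_lt_one (G := G) i]

theorem apply_pos_of_adj (hS : G.IsMetropolisMatrix S) {i j : V} (hij : G.Adj i j) :
    0 < S i j :=
  (hS.apply_of_adj hij).symm ▸ metropolisWeight_pos i j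

theorem mem_rowStochastic (hS : G.IsMetropolisMatrix S) : S ∈ rowStochastic ℝ V := by
  refine ⟨fun i j => ?_, funext fun i => by simp [hS.mulVec_apply]⟩
  by_cases hij : G.Adj i j
  · exact (hS.apply_pos_of_adj hij).le
  by_cases h : i = j
  · exact h ▸ (hS.apply_self_pos i).le
  · rw [hS i j, if_neg hij, if_neg h]

theorem isHermitian (hS : G.IsMetropolisMatrix S) : S.IsHermitian := by
  ext i j
  rw [conjTranspose_apply, star_trivial, hS i j, hS j i]
  by_cases hij : G.Adj i j
  · rw [if_pos hij, if_pos hij.symm, metropolisWeight_comm]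
  · rw [if_neg hij, if_neg fun h => hij h.symm]
    by_cases h : i = j
    · subst h; rfl
    · rw [if_neg h, if_neg (Ne.symm h)]

theorem summable_pow_mulVec (hS : G.IsMetropolisMatrix S) (hconn : G.Connected) {e : V → ℝ}
    (he : ∑ i, e i = 0) : Summable fun t : ℕ => S ^ t *ᵥ e := by
  refine hS.isHermitian.summable_pow_mulVec fun k => ?_
  refine (abs_lt_one_or_eq_of_mulVec_eq_smul hconn hS.mem_rowStochastic hS.apply_self_pos
    (fun _ _ => hS.apply_pos_of_adj) (hS.isHermitian.mulVec_eigenvectorBasis k)).imp_right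
    fun hconst => ?_
  obtain ⟨i₀⟩ := hconn.nonempty
  simp [PiLp.inner_apply, hconst _ i₀, ← sum_mul, he]

theorem sum_neighborFinset_flow_eq (hS : G.IsMetropolisMatrix S) {g : ℕ → V → ℝ}
    {h : ℕ → V → V → ℝ} (hgrec : ∀ t, g (t + 1) = S *ᵥ g t) (hh0 : ∀ i j, h 0 i j = 0)
    (hhrec : ∀ t i j, h (t + 1) i j = h t i j + G.metropolisWeight i j * (g t j - g t i))
    (t : ℕ) (i : V) : ∑ j ∈ G.neighborFinset i, h t i j = g t i - g 0 i := by
  induction t with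
  | zero => simp [hh0]
  | succ t ih =>
    simp only [hhrec, sum_add_distrib, ih, hgrec, hS.mulVec_apply]
    ring

end IsMetropolisMatrix

end SimpleGraph

theorem flow_limits_exist_and_balance (n : ℕ) (G : SimpleGraph (Fin n))
    [DecidableRel G.Adj] (hconn : G.Connected)
    (S : Matrix (Fin n) (Fin n) ℝ)
    (hS : ∀ i j, S i j =
      if G.Adj i j then 1 / (1 + max (G.degree i) (G.degree j) : ℝ)
      else if i = j then
        1 - ∑ k ∈ G.neighborFinset i, 1 / (1 + max (G.degree i) (G.degree k) : ℝ)
      else 0)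
    (e : Fin n → ℝ) (hsum : ∑ i, e i = 0)
    (g : ℕ → Fin n → ℝ) (h : ℕ → Fin n → Fin n → ℝ)
    (hg0 : g 0 = e)
    (hgrec : ∀ t, g (t + 1) = S *ᵥ g t)
    (hh0 : ∀ i j, h 0 i j = 0)
    (hhrec : ∀ t i j, h (t + 1) i j =
      h t i j + (1 / (1 + max (G.degree i) (G.degree j) : ℝ)) * (g t j - g t i)) :
    ∃ hss : Fin n → Fin n → ℝ,
      (∀ i j, Tendsto (fun t : ℕ => h t i j) atTop (nhds (hss i j))) ∧
      ∀ i, ∑ j ∈ G.neighborFinset i, hss i j = -e i := by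
  have hSm : G.IsMetropolisMatrix S := hS
  have hg (t : ℕ) : g t = S ^ t *ᵥ e := by
    induction t with
    | zero => simp [hg0]
    | succ t ih => rw [hgrec, ih, mulVec_mulVec, ← pow_succ']
  have hgsum (i : Fin n) : Summable fun t => g t i := by
    simp_rw [hg]
    exact Pi.summable.mp (hSm.summable_pow_mulVec hconn hsum) i
  have hdiff (i j : Fin n) : Summable fun t => h (t + 1) i j - h t i j := by
    simp_rw [hhrec, add_sub_cancel_left]
    exact ((hgsum j).sub (hgsum i)).mul_left _
  have hlim (i j : Fin n) := tendsto_add_tsum_sub_of_summable (f := fun t => h t i j) (hdiff i j)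
  refine ⟨_, hlim, fun i => tendsto_nhds_unique (tendsto_finsetSum _ fun j _ => hlim i j) ?_⟩
  simp_rw [hSm.sum_neighborFinset_flow_eq hgrec hh0 hhrec, hg0]
  simpa using (hgsum i).tendsto_atTop_zero.sub_const (e i)
end

section
/- Let Q be a nonnegative primitive n×n matrix with Q^m → r·1^T (r > 0, 1^T r = 1). Given real vectors z(0) and w(0) with w_i(0) = Δb_i - Δa_i ≥ 0, ∑_i w_i(0) > 0, and ∑_i z_i(0) = E - ∑_i Δa_i, the quantities Δp_i := Δa_i + ((Δb_i - Δa_i)/w_{i,ss})·z_{i,ss}, where z_ss = lim Q^m z(0) and w_ss = lim Q^m w(0), equal Δa_i + ((Δb_i - Δa_i)/(∑_j (Δb_j - Δa_j)))·(E - ∑_j Δa_j). -/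
open Finset Matrix Filter

theorem ratio_consensus_generation_control (n : ℕ)
    (Q : Matrix (Fin n) (Fin n) ℝ)
    (hnonneg : ∀ i j, 0 ≤ Q i j)
    (hprim : ∃ k : ℕ, ∀ i j, 0 < (Q ^ k) i j)
    (r : Fin n → ℝ) (hr : ∀ i, 0 < r i) (hrsum : ∑ i, r i = 1)
    (hQlim : Tendsto (fun m : ℕ => Q ^ m) atTop (nhds (Matrix.of fun i _ => r i)))
    (Δa Δb : Fin n → ℝ) (E : ℝ)
    (hab : ∀ i, Δa i ≤ Δb i) (hwpos : 0 < ∑ i, (Δb i - Δa i))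
    (z0 w0 zss wss : Fin n → ℝ)
    (hw0 : ∀ i, w0 i = Δb i - Δa i)
    (hz0sum : ∑ i, z0 i = E - ∑ i, Δa i)
    (hzss : Tendsto (fun m : ℕ => (Q ^ m) *ᵥ z0) atTop (nhds zss))
    (hwss : Tendsto (fun m : ℕ => (Q ^ m) *ᵥ w0) atTop (nhds wss)) :
    ∀ i, Δa i + ((Δb i - Δa i) / wss i) * zss i
      = Δa i + ((Δb i - Δa i) / (∑ j, (Δb j - Δa j))) * (E - ∑ j, Δa j) := by
  have hcont : ∀ v : Fin n → ℝ,
      Tendsto (fun m : ℕ => (Q ^ m) *ᵥ v) atTop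
        (nhds ((Matrix.of fun i _ => r i) *ᵥ v)) := fun v =>
    ((continuous_id.matrix_mulVec continuous_const).tendsto _).comp hQlim
  have hz : zss = (Matrix.of fun i _ => r i) *ᵥ z0 := tendsto_nhds_unique hzss (hcont z0)
  have hw : wss = (Matrix.of fun i _ => r i) *ᵥ w0 := tendsto_nhds_unique hwss (hcont w0)
  intro i
  have hzi : zss i = r i * (E - ∑ j, Δa j) := by
    rw [hz]
    simp [Matrix.mulVec, dotProduct, ← Finset.mul_sum, hz0sum]
  have hwi : wss i = r i * ∑ j, (Δb j - Δa j) := by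
    rw [hw]
    simp [Matrix.mulVec, dotProduct, ← Finset.mul_sum, hw0]
  rw [hzi, hwi]
  have hri := (hr i).ne'
  have hS := hwpos.ne'
  congr 1
  rw [div_mul_eq_mul_div, div_mul_eq_mul_div, mul_comm (r i) (∑ j, (Δb j - Δa j)),
    ← mul_assoc, mul_right_comm, mul_div_mul_right _ _ hri]
end
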